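/- Let G be a graph with signless Laplacian eigenvalue q and eigenvector f, and let z_1, z_2 be adjacent vertices with N(z_2) \ {z_1} ⊆ N(z_1) \ {z_2} and deg(z_1) > deg(z_2). If f is entrywise positive and q > deg(z_1) - 1, then f_{z_1} > f_{z_2}. -/

import Mathlib

open SimpleGraph

/-- `K_δ ∨ (K_{n-2δ+k} ∪ I_{δ-k})` on `Fin n`: vertices `< d` form the dominating
clique `K_d`, vertices in `[d, n-d+k)` form the clique, the rest are independent. -/
def Hgraph (n k d : ℕ) : SimpleGraph (Fin n) where
  Adj u v := u ≠ v ∧ ((u : ℕ) < d ∨ (v : ℕ) < d ∨ ((u : ℕ) < n - d + k ∧ (v : ℕ) < n - d + k))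
  symm := ⟨by intro u v h; exact ⟨h.1.symm, by tauto⟩⟩
  loopless := ⟨by intro u h; exact h.1 rfl⟩

/-- `K_{k+1} ∨ (K_{n-d-1} ∪ K_{d-k})` on `Fin n`: vertices `< k+1` form the dominating
clique, `[k+1, n-d+k)` forms `K_{n-d-1}`, `[n-d+k, n)` forms `K_{d-k}`. -/
def Lgraph (n k d : ℕ) : SimpleGraph (Fin n) where
  Adj u v := u ≠ v ∧ ((u : ℕ) < k + 1 ∨ (v : ℕ) < k + 1 ∨
    ((u : ℕ) < n - d + k ∧ (v : ℕ) < n - d + k) ∨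
    (n - d + k ≤ (u : ℕ) ∧ n - d + k ≤ (v : ℕ)))
  symm := ⟨by intro u v h; exact ⟨h.1.symm, by tauto⟩⟩
  loopless := ⟨by intro u h; exact h.1 rfl⟩

/-- `K_m ∪ I_{n-m}` on `Fin n`: vertices `< m` form a clique, the rest are isolated. -/
def KIgraph (n m : ℕ) : SimpleGraph (Fin n) where
  Adj u v := u ≠ v ∧ (u : ℕ) < m ∧ (v : ℕ) < m
  symm := ⟨by intro u v h; exact ⟨h.1.symm, h.2.2, h.2.1⟩⟩
  loopless := ⟨by intro u h; exact h.1 rfl⟩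

/-- Degree of a vertex, as the cardinality of its neighbour set. -/
noncomputable def deg {V : Type*} (G : SimpleGraph V) (v : V) : ℕ := (G.neighborSet v).ncard

/-- Number of edges of a graph. -/
noncomputable def eCount {V : Type*} (G : SimpleGraph V) : ℕ := G.edgeSet.ncard

open scoped Classical in
/-- Adjacency matrix over `ℝ`. -/
noncomputable def adjMat {V : Type*} [Fintype V] (G : SimpleGraph V) : Matrix V V ℝ :=
  fun u v => if G.Adj u v then 1 else 0

open scoped Classical in
/-- Signless Laplacian matrix `Q(G) = D(G) + A(G)` over `ℝ`. -/
noncomputable def sLap {V : Type*} [Fintype V] (G : SimpleGraph V) : Matrix V V ℝ :=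
  fun u v => (if u = v then (deg G u : ℝ) else 0) + (if G.Adj u v then 1 else 0)

/-- The largest (real) eigenvalue of a matrix. -/
noncomputable def maxEig {V : Type*} [Fintype V] (A : Matrix V V ℝ) : ℝ :=
  sSup {μ : ℝ | ∃ x : V → ℝ, x ≠ 0 ∧ A.mulVec x = μ • x}

/-- A graph is `k`-Hamiltonian if deleting any set of at most `k` vertices
leaves a Hamiltonian graph. -/
def IsKHamiltonian {n : ℕ} (G : SimpleGraph (Fin n)) (k : ℕ) : Prop :=
  ∀ S : Finset (Fin n), S.card ≤ k →
    (G.induce ((↑(Sᶜ) : Set (Fin n)))).IsHamiltonian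

/-- A graph is `k`-edge-Hamiltonian if every linear forest with at most `k` edges
(a set of edges forming vertex-disjoint paths) is contained in a Hamiltonian cycle. -/
def IsKEdgeHamiltonian {n : ℕ} (G : SimpleGraph (Fin n)) (k : ℕ) : Prop :=
  ∀ F : Set (Sym2 (Fin n)), F ⊆ G.edgeSet → F.ncard ≤ k →
    (SimpleGraph.fromEdgeSet F).IsAcyclic →
    (∀ v, ((SimpleGraph.fromEdgeSet F).neighborSet v).ncard ≤ 2) →
    ∃ (a : Fin n) (p : G.Walk a a), p.IsHamiltonianCycle ∧ ∀ e ∈ F, e ∈ p.edges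

/-- The `s`-closure of a graph: the smallest supergraph in which any two distinct
non-adjacent vertices have degree sum less than `s`. -/
noncomputable def closureGraph {V : Type*} (G : SimpleGraph V) (s : ℕ) : SimpleGraph V :=
  sInf {H | G ≤ H ∧ ∀ u v, u ≠ v → s ≤ deg H u + deg H v → H.Adj u v}

/-!
Subtracting the eigen-equations of `Q(G)` at adjacent `z₁`, `z₂` gives
`(q - d(z₁) + 1) (f z₁ - f z₂) = (d(z₁) - d(z₂)) f z₂ + (∑_{N(z₁)∖z₂} f - ∑_{N(z₂)∖z₁} f)`.
The neighbourhood inclusion and positivity of `f` make the right side positive, and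
`q > d(z₁) - 1` makes the coefficient on the left positive.
-/

section SignlessLaplacian

variable {V : Type*} [Fintype V] (G : SimpleGraph V) [DecidableRel G.Adj]

lemma deg_eq_degree (v : V) : deg G v = G.degree v := by
  rw [deg, ← card_neighborFinset_eq_degree, ← Set.ncard_coe_finset, coe_neighborFinset]

lemma sLap_mulVec_apply (f : V → ℝ) (z : V) :
    (sLap G).mulVec f z = G.degree z * f z + ∑ v ∈ G.neighborFinset z, f v := by
  classical
  simp only [sLap, Matrix.mulVec, dotProduct, add_mul, ite_mul, one_mul, zero_mul,
    Finset.sum_add_distrib, Finset.sum_ite_eq, Finset.mem_univ, if_true, deg_eq_degree]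
  rw [← Finset.sum_filter, neighborFinset_eq_filter]

variable [DecidableEq V]

lemma sub_mul_eigvec_sub_of_adj {f : V → ℝ} {q : ℝ} (heig : (sLap G).mulVec f = q • f)
    {z₁ z₂ : V} (hadj : G.Adj z₁ z₂) :
    (q - G.degree z₁ + 1) * (f z₁ - f z₂) =
      (G.degree z₁ - G.degree z₂ : ℝ) * f z₂ +
        (∑ v ∈ (G.neighborFinset z₁).erase z₂, f v - ∑ v ∈ (G.neighborFinset z₂).erase z₁, f v) := by
  have h₁ := congrFun heig z₁
  have h₂ := congrFun heig z₂
  rw [sLap_mulVec_apply, ← Finset.sum_erase_add _ _ ((G.mem_neighborFinset _ _).2 hadj)] at h₁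
  rw [sLap_mulVec_apply, ← Finset.sum_erase_add _ _ ((G.mem_neighborFinset _ _).2 hadj.symm)] at h₂
  simp only [Pi.smul_apply, smul_eq_mul] at h₁ h₂
  linear_combination h₂ - h₁

lemma neighborFinset_erase_subset {z₁ z₂ : V}
    (hN : G.neighborSet z₂ \ {z₁} ⊆ G.neighborSet z₁ \ {z₂}) :
    (G.neighborFinset z₂).erase z₁ ⊆ (G.neighborFinset z₁).erase z₂ := by
  intro v hv
  rw [Finset.mem_erase, mem_neighborFinset] at hv ⊢
  obtain ⟨hv₁, hv₂⟩ := hN ⟨hv.2, hv.1⟩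
  exact ⟨hv₂, hv₁⟩

end SignlessLaplacian

/-- Monotonicity of Perron entries: if `z₁ ~ z₂`, `N(z₂)\{z₁} ⊆ N(z₁)\{z₂}`,
`d(z₁) > d(z₂)`, `f` is a positive eigenvector of `Q(G)` for `q > d(z₁) - 1`,
then `f_{z₁} > f_{z₂}`. -/
theorem stmt_17 {V : Type*} [Fintype V] (G : SimpleGraph V) (f : V → ℝ) (q : ℝ)
    (hf : ∀ v, 0 < f v) (heig : (sLap G).mulVec f = q • f)
    (z1 z2 : V) (hadj : G.Adj z1 z2)
    (hN : G.neighborSet z2 \ {z1} ⊆ G.neighborSet z1 \ {z2})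
    (hdeg : deg G z2 < deg G z1)
    (hq : (deg G z1 : ℝ) - 1 < q) :
    f z2 < f z1 := by
  classical
  rw [deg_eq_degree, deg_eq_degree] at hdeg
  rw [deg_eq_degree] at hq
  have hsum : ∑ v ∈ (G.neighborFinset z2).erase z1, f v ≤
      ∑ v ∈ (G.neighborFinset z1).erase z2, f v :=
    Finset.sum_le_sum_of_subset_of_nonneg (neighborFinset_erase_subset G hN)
      fun v _ _ => (hf v).le
  have hdeg' : (0 : ℝ) < G.degree z1 - G.degree z2 := sub_pos.2 (by exact_mod_cast hdeg)
  have hprod : 0 < (q - G.degree z1 + 1) * (f z1 - f z2) := by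
    rw [sub_mul_eigvec_sub_of_adj G heig hadj]
    linarith [mul_pos hdeg' (hf z2)]
  have hcoef : 0 < q - G.degree z1 + 1 := by linarith
  exact sub_pos.1 (pos_of_mul_pos_right hprod hcoef.le)
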